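/- arXiv:2301.00782 — 7 statements merged into one kernel-verified Lean document; each statement's English description precedes it below -/
import Mathlib

section
/- Let d ≥ 1 and ν ≥ 0, and let (F,G) : ℝ → ℝ² solve the ODE system F' = -F² - G - νF, G' = F - d·F·G. Then the quantity (1 - d·G(t))·exp(d·∫₀ᵗ F(s) ds) is constant in time; in particular, the sign of 1 - d·G(t) equals the sign of 1 - d·G(0) for all t. -/
/-!
Writing `u = 1 - d·G`, the second equation reads `u' = -d·F·u`, a scalar linear ODE; the
integrating factor `exp (d·∫₀ᵗ F)` turns it into `(u·exp (d·∫₀ᵗ F))' = 0`, and a positive factor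
does not change signs.
-/

open intervalIntegral

theorem Real.sign_mul_of_pos_right (x : ℝ) {y : ℝ} (hy : 0 < y) :
    Real.sign (x * y) = Real.sign x := by
  rcases lt_trichotomy x 0 with hx | rfl | hx
  · rw [Real.sign_of_neg hx, Real.sign_of_neg (mul_neg_of_neg_of_pos hx hy)]
  · simp
  · rw [Real.sign_of_pos hx, Real.sign_of_pos (mul_pos hx hy)]

theorem mul_exp_integral_eq_of_hasDerivAt_neg_mul {a u : ℝ → ℝ} (ha : Continuous a)
    (hu : ∀ t, HasDerivAt u (-(a t * u t)) t) (t : ℝ) :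
    u t * Real.exp (∫ s in (0 : ℝ)..t, a s) = u 0 := by
  have hderiv : ∀ x, HasDerivAt (fun x => u x * Real.exp (∫ s in (0 : ℝ)..x, a s)) 0 x := fun x =>
    ((hu x).mul (ha.integral_hasStrictDerivAt 0 x).hasDerivAt.exp).congr_deriv (by ring)
  simpa using is_const_of_deriv_eq_zero (fun x => (hderiv x).differentiableAt)
    (fun x => (hderiv x).deriv) t 0

theorem stmt0_general (d : ℕ) (ν : ℝ)
    (F G : ℝ → ℝ)
    (hF : ∀ t, HasDerivAt F (-(F t) ^ 2 - G t - ν * F t) t)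
    (hG : ∀ t, HasDerivAt G (F t - (d : ℝ) * F t * G t) t) :
    (∀ t : ℝ,
      (1 - (d : ℝ) * G t) * Real.exp ((d : ℝ) * ∫ s in (0:ℝ)..t, F s)
        = 1 - (d : ℝ) * G 0) ∧
    (∀ t : ℝ, Real.sign (1 - (d : ℝ) * G t) = Real.sign (1 - (d : ℝ) * G 0)) := by
  have hFc : Continuous F := continuous_iff_continuousAt.2 fun t => (hF t).continuousAt
  have hu : ∀ t, HasDerivAt (fun t => 1 - (d : ℝ) * G t)
      (-((d : ℝ) * F t * (1 - (d : ℝ) * G t))) t := fun t =>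
    (((hG t).const_mul (d : ℝ)).const_sub 1).congr_deriv (by ring)
  have hconst : ∀ t : ℝ,
      (1 - (d : ℝ) * G t) * Real.exp ((d : ℝ) * ∫ s in (0:ℝ)..t, F s) = 1 - (d : ℝ) * G 0 :=
    fun t => by
      simpa only [integral_const_mul] using
        mul_exp_integral_eq_of_hasDerivAt_neg_mul (hFc.const_mul (d : ℝ)) hu t
  refine ⟨hconst, fun t => ?_⟩
  rw [← hconst t, Real.sign_mul_of_pos_right _ (Real.exp_pos _)]

/-- Along solutions of the characteristic ODE system `F' = -F² - G - νF`,
`G' = F - d·F·G`, the quantity `(1 - d·G(t))·exp(d·∫₀ᵗ F)` is constant;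
in particular the sign of `1 - d·G(t)` is that of `1 - d·G(0)`. -/
theorem stmt0 (d : ℕ) (hd : 1 ≤ d) (ν : ℝ) (hν : 0 ≤ ν)
    (F G : ℝ → ℝ)
    (hF : ∀ t, HasDerivAt F (-(F t) ^ 2 - G t - ν * F t) t)
    (hG : ∀ t, HasDerivAt G (F t - (d : ℝ) * F t * G t) t) :
    (∀ t : ℝ,
      (1 - (d : ℝ) * G t) * Real.exp ((d : ℝ) * ∫ s in (0:ℝ)..t, F s)
        = 1 - (d : ℝ) * G 0) ∧
    (∀ t : ℝ, Real.sign (1 - (d : ℝ) * G t) = Real.sign (1 - (d : ℝ) * G 0)) :=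
  stmt0_general d ν F G hF hG
end

section
/- Let d ≥ 1, d ≠ 2, and define Φ(G,F) = ((d-2)F² - 2G + 1)/((d-2)(1 - dG)^{2/d}) on the half-plane G < 1/d. If (F,G) solves F' = -F² - G, G' = F - dFG (the frictionless system, ν = 0) with G(t) < 1/d for all t, then Φ(G(t), F(t)) is constant in t. -/
/-!
Along the frictionless flow both the numerator `N = (d-2)F² - 2G + 1` and `u^{2/d}`, with
`u = 1 - dG`, solve the same linear equation `y' = -2F y`: indeed `N' = -2F N` and `u' = -dF u`.
Hence `N / u^{2/d}` is constant, and `Φ` is this constant divided by `d - 2`.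
-/

theorem HasDerivAt.div_eq_zero_of_same_logDeriv {𝕜 : Type*} [NontriviallyNormedField 𝕜]
    {f g : 𝕜 → 𝕜} {a x : 𝕜} (hf : HasDerivAt f (a * f x) x) (hg : HasDerivAt g (a * g x) x)
    (hx : g x ≠ 0) : HasDerivAt (fun t => f t / g t) 0 x :=
  (hf.fun_div hg hx).congr_deriv (by ring)

namespace ColdPlasma

variable {d : ℝ} {F G : ℝ → ℝ} {t : ℝ}

noncomputable def invariant (d f g : ℝ) : ℝ :=
  ((d - 2) * f ^ 2 - 2 * g + 1) / (1 - d * g) ^ ((2 : ℝ) / d)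

theorem hasDerivAt_numerator (hF : HasDerivAt F (-(F t) ^ 2 - G t) t)
    (hG : HasDerivAt G (F t - d * F t * G t) t) :
    HasDerivAt (fun s => (d - 2) * F s ^ 2 - 2 * G s + 1)
      (-2 * F t * ((d - 2) * F t ^ 2 - 2 * G t + 1)) t :=
  ((((hF.pow 2).const_mul (d - 2)).sub (hG.const_mul 2)).add_const 1).congr_deriv (by ring)

theorem hasDerivAt_one_sub_mul_rpow (hd : d ≠ 0) (hG : HasDerivAt G (F t - d * F t * G t) t)
    (hu : 0 < 1 - d * G t) :
    HasDerivAt (fun s => (1 - d * G s) ^ ((2 : ℝ) / d))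
      (-2 * F t * (1 - d * G t) ^ ((2 : ℝ) / d)) t := by
  convert ((hG.const_mul d).const_sub 1).rpow_const (p := 2 / d) (Or.inl hu.ne') using 1
  rw [Real.rpow_sub hu, Real.rpow_one]
  field_simp

theorem hasDerivAt_invariant (hd : d ≠ 0) (hF : HasDerivAt F (-(F t) ^ 2 - G t) t)
    (hG : HasDerivAt G (F t - d * F t * G t) t) (hu : 0 < 1 - d * G t) :
    HasDerivAt (fun s => invariant d (F s) (G s)) 0 t :=
  (hasDerivAt_numerator hF hG).div_eq_zero_of_same_logDeriv (hasDerivAt_one_sub_mul_rpow hd hG hu)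
    (Real.rpow_pos_of_pos hu _).ne'

theorem invariant_eq (hd : d ≠ 0) (hF : ∀ t, HasDerivAt F (-(F t) ^ 2 - G t) t)
    (hG : ∀ t, HasDerivAt G (F t - d * F t * G t) t) (hu : ∀ t, 0 < 1 - d * G t) (s t : ℝ) :
    invariant d (F s) (G s) = invariant d (F t) (G t) :=
  is_const_of_deriv_eq_zero
    (fun t => (hasDerivAt_invariant hd (hF t) (hG t) (hu t)).differentiableAt)
    (fun t => (hasDerivAt_invariant hd (hF t) (hG t) (hu t)).deriv) s t

end ColdPlasma

theorem stmt4_general (d : ℕ) (hd : 1 ≤ d)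
    (F G : ℝ → ℝ)
    (hF : ∀ t, HasDerivAt F (-(F t) ^ 2 - G t) t)
    (hG : ∀ t, HasDerivAt G (F t - (d : ℝ) * F t * G t) t)
    (hhalf : ∀ t, G t < 1 / d) :
    ∀ t : ℝ,
      (((d : ℝ) - 2) * (F t) ^ 2 - 2 * G t + 1)
          / (((d : ℝ) - 2) * (1 - (d : ℝ) * G t) ^ ((2 : ℝ) / d))
        = (((d : ℝ) - 2) * (F 0) ^ 2 - 2 * G 0 + 1)
          / (((d : ℝ) - 2) * (1 - (d : ℝ) * G 0) ^ ((2 : ℝ) / d)) := by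
  have hd0 : (0 : ℝ) < d := by exact_mod_cast hd
  have hu (t : ℝ) : 0 < 1 - (d : ℝ) * G t := by
    linarith [(lt_div_iff₀' hd0).mp (hhalf t)]
  intro t
  rw [div_mul_eq_div_div_swap, div_mul_eq_div_div_swap]
  exact congrArg (· / ((d : ℝ) - 2)) (ColdPlasma.invariant_eq hd0.ne' hF hG hu t 0)

/-- For `d ≥ 1`, `d ≠ 2`, the function
`Φ(G,F) = ((d-2)F² - 2G + 1)/((d-2)(1-dG)^{2/d})` is a first integral of the
frictionless system `F' = -F² - G`, `G' = F - dFG` on the half-plane `G < 1/d`. -/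
theorem stmt4 (d : ℕ) (hd : 1 ≤ d) (hd2 : d ≠ 2)
    (F G : ℝ → ℝ)
    (hF : ∀ t, HasDerivAt F (-(F t) ^ 2 - G t) t)
    (hG : ∀ t, HasDerivAt G (F t - (d : ℝ) * F t * G t) t)
    (hhalf : ∀ t, G t < 1 / d) :
    ∀ t : ℝ,
      (((d : ℝ) - 2) * (F t) ^ 2 - 2 * G t + 1)
          / (((d : ℝ) - 2) * (1 - (d : ℝ) * G t) ^ ((2 : ℝ) / d))
        = (((d : ℝ) - 2) * (F 0) ^ 2 - 2 * G 0 + 1)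
          / (((d : ℝ) - 2) * (1 - (d : ℝ) * G 0) ^ ((2 : ℝ) / d)) :=
  stmt4_general d hd F G hF hG hhalf
end

section
/- Define Φ(G,F) = (2F² + (1-2G)·ln(1-2G) + 1)/(2(1-2G)) on the half-plane G < 1/2. If (F,G) solves F' = -F² - G, G' = F - 2FG with G(t) < 1/2 for all t, then Φ(G(t), F(t)) is constant in t. -/
/-!
Along solutions `u = 1 - 2G` satisfies `u' = -2Fu`. Writing
`Φ = (2F² + 1)/(2u) + (log u)/2`, the first term has derivative `F` and the second
`u'/(2u) = -F`, so `Φ` has derivative zero everywhere and is constant.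
-/

noncomputable def firstIntegral (G F : ℝ) : ℝ :=
  (2 * F ^ 2 + (1 - 2 * G) * Real.log (1 - 2 * G) + 1) / (2 * (1 - 2 * G))

theorem hasDerivAt_firstIntegral_comp {F G : ℝ → ℝ} {t : ℝ}
    (hF : HasDerivAt F (-(F t) ^ 2 - G t) t) (hG : HasDerivAt G (F t - 2 * F t * G t) t)
    (hGt : G t < 1 / 2) :
    HasDerivAt (fun s => firstIntegral (G s) (F s)) 0 t := by
  have hu : 1 - 2 * G t ≠ 0 := by linarith
  have hu' : HasDerivAt (fun s => 1 - 2 * G s) (-2 * (F t * (1 - 2 * G t))) t :=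
    ((hG.const_mul 2).const_sub 1).congr_deriv (by ring)
  have hlog := hu'.log hu
  have hnum := (((hF.fun_pow 2).const_mul 2).fun_add (hu'.fun_mul hlog)).add_const 1
  refine (hnum.div (hu'.const_mul 2) (mul_ne_zero two_ne_zero hu)).congr_deriv ?_
  field_simp
  norm_num
  ring

/-- `Φ(G,F) = (2F² + (1-2G)ln(1-2G) + 1)/(2(1-2G))` is a first integral of the
frictionless system `F' = -F² - G`, `G' = F - 2FG` on the half-plane `G < 1/2`. -/
theorem stmt5 (F G : ℝ → ℝ)
    (hF : ∀ t, HasDerivAt F (-(F t) ^ 2 - G t) t)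
    (hG : ∀ t, HasDerivAt G (F t - 2 * F t * G t) t)
    (hhalf : ∀ t, G t < 1 / 2) :
    ∀ t : ℝ,
      (2 * (F t) ^ 2 + (1 - 2 * G t) * Real.log (1 - 2 * G t) + 1)
          / (2 * (1 - 2 * G t))
        = (2 * (F 0) ^ 2 + (1 - 2 * G 0) * Real.log (1 - 2 * G 0) + 1)
          / (2 * (1 - 2 * G 0)) := by
  have hΦ (t : ℝ) := hasDerivAt_firstIntegral_comp (hF t) (hG t) (hhalf t)
  intro t
  exact is_const_of_deriv_eq_zero (fun s => (hΦ s).differentiableAt) (fun s => (hΦ s).deriv) t 0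
end

section
/- Let d ≥ 1 and ν > 0. The system F' = -F² - G - νF, G' = F - dFG has no periodic orbit (closed trajectory of positive period) contained in the half-plane {(G,F) : G < 1/d}. -/
/-!
The weighted energy `Φ(F, G) = (1 - dG)^(-2/d) F² + ∫₀^G 2s (1 - ds)^(-2/d - 1) ds` is conserved
by the frictionless flow and decreases at rate `2νF² (1 - dG)^(-2/d)` along the damped one. On a
closed orbit `Φ` returns to its initial value, so it is constant; this forces `F ≡ 0`, hence
`G = -F' ≡ 0`, on `(0, T)`. The orbit therefore passes through the rest point `(0, 0)`, and by
uniqueness of solutions for the locally Lipschitz vector field it stays there.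
-/

open Set Filter Topology

theorem ODE_solution_eq_of_equilibrium {E : Type*} [NormedAddCommGroup E] [NormedSpace ℝ E]
    {V : E → E} (hV : LocallyLipschitz V) {γ : ℝ → E} (hγ : ∀ t, HasDerivAt γ (V (γ t)) t)
    {t₀ : ℝ} (hrest : V (γ t₀) = 0) (t : ℝ) : γ t = γ t₀ := by
  obtain ⟨a, b, hta, ht₀⟩ : ∃ a b, t ∈ Ioo a b ∧ t₀ ∈ Ioo a b :=
    ⟨min t t₀ - 1, max t t₀ + 1, by constructor <;> constructor <;> grind⟩
  have hcompact : IsCompact (γ '' Icc a b) :=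
    isCompact_Icc.image (continuous_iff_continuousAt.2 fun t => (hγ t).continuousAt)
  obtain ⟨K, hK⟩ := hV.locallyLipschitzOn.exists_lipschitzOnWith_of_compact hcompact
  refine ODE_solution_unique_of_mem_Ioo (v := fun _ => V) (s := fun _ => γ '' Icc a b)
    (fun _ _ => hK) ht₀ (fun t ht => ⟨hγ t, mem_image_of_mem γ (Ioo_subset_Icc_self ht)⟩)
    (fun t _ => ⟨?_, mem_image_of_mem γ (Ioo_subset_Icc_self ht₀)⟩) rfl hta
  simpa [hrest] using hasDerivAt_const t (γ t₀)

theorem HasDerivAt.eq_zero_of_eventuallyEq_const {f : ℝ → ℝ} {f' c t : ℝ} (hf : HasDerivAt f f' t)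
    (h : f =ᶠ[𝓝 t] fun _ => c) : f' = 0 :=
  hf.unique ((hasDerivAt_const t c).congr_of_eventuallyEq h)

noncomputable def lyapunovDensity (d s : ℝ) : ℝ := 2 * s * (1 - d * s) ^ (-2 / d - 1)

noncomputable def lyapunov (d f g : ℝ) : ℝ :=
  (1 - d * g) ^ (-2 / d) * f ^ 2 + ∫ s in (0 : ℝ)..g, lyapunovDensity d s

theorem continuousAt_lyapunovDensity {d s : ℝ} (hs : 1 - d * s ≠ 0) :
    ContinuousAt (lyapunovDensity d) s := by
  unfold lyapunovDensity
  exact (continuousAt_id.const_mul 2).mul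
    (((continuousAt_id.const_mul d).const_sub 1).rpow_const (Or.inl hs))

theorem hasDerivAt_integral_lyapunovDensity {d g : ℝ} (hg : 0 < 1 - d * g) :
    HasDerivAt (fun y => ∫ s in (0 : ℝ)..y, lyapunovDensity d s) (lyapunovDensity d g) g := by
  set U : Set ℝ := {s | d * s < 1}
  have hU : IsOpen U := isOpen_lt (by fun_prop) continuous_const
  have hcont : ContinuousOn (lyapunovDensity d) U := fun s hs =>
    (continuousAt_lyapunovDensity
      (by simp only [U, mem_ofPred_eq] at hs; linarith)).continuousWithinAt
  have hgU : g ∈ U := by simp only [U, mem_ofPred_eq]; linarith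
  have hsegment : uIcc 0 g ⊆ U :=
    (convex_halfSpace_lt (IsLinearMap.isLinearMap_smul d) 1).ordConnected.uIcc_subset
      (by simp) hgU
  exact intervalIntegral.integral_hasDerivAt_right ((hcont.mono hsegment).intervalIntegrable)
    (hcont.stronglyMeasurableAtFilter hU g hgU) (hcont.continuousAt (hU.mem_nhds hgU))

theorem hasDerivAt_lyapunov_comp {d ν : ℝ} {F G : ℝ → ℝ} {t : ℝ} (hd : d ≠ 0)
    (hF : HasDerivAt F (-(F t) ^ 2 - G t - ν * F t) t)
    (hG : HasDerivAt G (F t - d * F t * G t) t) (hu : 0 < 1 - d * G t) :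
    HasDerivAt (fun t => lyapunov d (F t) (G t))
      (-(2 * ν * F t ^ 2 * (1 - d * G t) ^ (-2 / d))) t := by
  have hweight := ((hG.const_mul d).const_sub 1).rpow_const (p := -2 / d) (Or.inl hu.ne')
  have hintegral := (hasDerivAt_integral_lyapunovDensity hu).comp t hG
  refine ((hweight.fun_mul (hF.fun_pow 2)).fun_add hintegral).congr_deriv ?_
  simp only [lyapunovDensity, Real.rpow_sub_one hu.ne']
  field_simp
  ring

theorem antitone_lyapunov_comp {d ν : ℝ} {F G : ℝ → ℝ} (hd : d ≠ 0) (hν : 0 ≤ ν)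
    (hF : ∀ t, HasDerivAt F (-(F t) ^ 2 - G t - ν * F t) t)
    (hG : ∀ t, HasDerivAt G (F t - d * F t * G t) t) (hu : ∀ t, 0 < 1 - d * G t) :
    Antitone fun t => lyapunov d (F t) (G t) :=
  antitone_of_hasDerivAt_nonpos (fun t => hasDerivAt_lyapunov_comp hd (hF t) (hG t) (hu t))
    fun t => neg_nonpos.2 <| by have := Real.rpow_pos_of_pos (hu t) (-2 / d); positivity

theorem eq_zero_of_lyapunov_comp_eq {d ν : ℝ} {F G : ℝ → ℝ} (hd : d ≠ 0) (hν : 0 < ν)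
    (hF : ∀ t, HasDerivAt F (-(F t) ^ 2 - G t - ν * F t) t)
    (hG : ∀ t, HasDerivAt G (F t - d * F t * G t) t) (hu : ∀ t, 0 < 1 - d * G t) {a b : ℝ}
    (heq : lyapunov d (F a) (G a) = lyapunov d (F b) (G b)) {t : ℝ} (ht : t ∈ Ioo a b) :
    F t = 0 ∧ G t = 0 := by
  have hanti := antitone_lyapunov_comp hd hν.le hF hG hu
  have hconst : ∀ s ∈ Ioo a b, lyapunov d (F s) (G s) = lyapunov d (F a) (G a) := fun s hs =>
    le_antisymm (hanti hs.1.le) (heq ▸ hanti hs.2.le)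
  have hF0 : ∀ s ∈ Ioo a b, F s = 0 := fun s hs => by
    have := (hasDerivAt_lyapunov_comp hd (hF s) (hG s) (hu s)).eq_zero_of_eventuallyEq_const
      (eventually_of_mem (Ioo_mem_nhds hs.1 hs.2) hconst)
    simpa [hν.ne', (Real.rpow_pos_of_pos (hu s) _).ne'] using this
  refine ⟨hF0 t ht, ?_⟩
  have := (hF t).eq_zero_of_eventuallyEq_const (eventually_of_mem (Ioo_mem_nhds ht.1 ht.2) hF0)
  simpa [hF0 t ht] using this

def dampedField (d ν : ℝ) (p : ℝ × ℝ) : ℝ × ℝ := (-p.1 ^ 2 - p.2 - ν * p.1, p.1 - d * p.1 * p.2)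

theorem locallyLipschitz_dampedField (d ν : ℝ) : LocallyLipschitz (dampedField d ν) :=
  ContDiff.locallyLipschitz (𝕂 := ℝ) (by unfold dampedField; fun_prop)

/-- For `d ≥ 1` and `ν > 0`, the system `F' = -F²-G-νF`, `G' = F-dFG` has no
periodic orbit contained in the half-plane `G < 1/d`: any solution staying in
this half-plane that returns to its initial point at some positive time is
constant. -/
theorem stmt7 (d : ℕ) (hd : 1 ≤ d) (ν : ℝ) (hν : 0 < ν)
    (F G : ℝ → ℝ)
    (hF : ∀ t, HasDerivAt F (-(F t) ^ 2 - G t - ν * F t) t)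
    (hG : ∀ t, HasDerivAt G (F t - (d : ℝ) * F t * G t) t)
    (hhalf : ∀ t, G t < 1 / d)
    (T : ℝ) (hT : 0 < T) (hper : F T = F 0 ∧ G T = G 0) :
    ∀ t : ℝ, F t = F 0 ∧ G t = G 0 := by
  have hd₀ : (0 : ℝ) < d := by exact_mod_cast hd
  have hu : ∀ t, 0 < 1 - (d : ℝ) * G t := fun t => by
    have := (lt_div_iff₀' hd₀).1 (hhalf t); linarith
  have hrest : F (T / 2) = 0 ∧ G (T / 2) = 0 :=
    eq_zero_of_lyapunov_comp_eq hd₀.ne' hν hF hG hu (by rw [hper.1, hper.2])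
      ⟨half_pos hT, half_lt_self hT⟩
  have hconst := ODE_solution_eq_of_equilibrium (locallyLipschitz_dampedField d ν)
    (fun t => (hF t).prodMk (hG t)) (t₀ := T / 2) (by simp [dampedField, hrest])
  intro t
  exact Prod.ext_iff.1 ((hconst t).trans (hconst 0).symm)
end

section
/- Let d ≥ 1, ν ≥ 0, and let (F, G, u, v) solve the system F' = -F² - G - νF, G' = F - dFG, u' = -u² - 2uF - v - νu, v' = -uv + (1-dG)u - dFv. Let (Q, p₁, p₂) solve the linear system Q' = p₁, p₁' = -(2F+ν)p₁ - p₂, p₂' = (1-dG)p₁ - dF·p₂ with Q(0) = 1, p₁(0) = u(0), p₂(0) = v(0). Then on any interval containing 0 on which Q does not vanish, u = p₁/Q and v = p₂/Q. -/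
/-!
The defects `a = Q u - p₁` and `b = Q v - p₂` satisfy, by the two systems,
`a' = -(u + 2F + ν) a - b` and `b' = (1 - dG - v) a - dF b`: a homogeneous linear system
with continuous coefficients and zero initial data. Grönwall's inequality forces `a = b = 0`
on all of `ℝ`, so `u = p₁ / Q` and `v = p₂ / Q` wherever `Q` does not vanish.
-/

open Set

theorem eq_zero_of_norm_deriv_le_mul_norm_of_le {E : Type*} [NormedAddCommGroup E]
    [NormedSpace ℝ E] {f f' : ℝ → E} {M : ℝ → ℝ} {t₀ t : ℝ}
    (hf : ∀ t, HasDerivAt f (f' t) t) (hM : Continuous M)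
    (bound : ∀ t, ‖f' t‖ ≤ M t * ‖f t‖) (h₀ : f t₀ = 0) (ht : t₀ ≤ t) : f t = 0 := by
  obtain ⟨s, -, hs⟩ :=
    isCompact_Icc.exists_isMaxOn (nonempty_Icc.2 ht) hM.continuousOn
  refine eq_zero_of_abs_deriv_le_mul_abs_self_of_eq_zero_right (K := M s)
    (fun x _ => (hf x).continuousAt.continuousWithinAt) (fun x _ => (hf x).hasDerivWithinAt)
    h₀ (fun x hx => (bound x).trans ?_) t (right_mem_Icc.2 ht)
  exact mul_le_mul_of_nonneg_right (hs (Ico_subset_Icc_self hx)) (norm_nonneg _)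

theorem eq_zero_of_norm_deriv_le_mul_norm {E : Type*} [NormedAddCommGroup E]
    [NormedSpace ℝ E] {f f' : ℝ → E} {M : ℝ → ℝ} {t₀ : ℝ}
    (hf : ∀ t, HasDerivAt f (f' t) t) (hM : Continuous M)
    (bound : ∀ t, ‖f' t‖ ≤ M t * ‖f t‖) (h₀ : f t₀ = 0) (t : ℝ) : f t = 0 := by
  rcases le_total t₀ t with ht | ht
  · exact eq_zero_of_norm_deriv_le_mul_norm_of_le hf hM bound h₀ ht
  · have hf_neg : ∀ s, HasDerivAt (fun s => f (-s)) (-f' (-s)) s := fun s => by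
      simpa [Function.comp_def] using (hf (-s)).scomp s (hasDerivAt_neg s)
    simpa using eq_zero_of_norm_deriv_le_mul_norm_of_le (t₀ := -t₀) (t := -t) hf_neg
      (hM.comp continuous_neg) (fun s => by simpa using bound (-s)) (by simpa using h₀)
      (neg_le_neg ht)

theorem norm_linear_prod_le (α β γ δ : ℝ) (x : ℝ × ℝ) :
    ‖(α * x.1 + β * x.2, γ * x.1 + δ * x.2)‖ ≤ (|α| + |β| + |γ| + |δ|) * ‖x‖ := by
  have h₁ : |x.1| ≤ ‖x‖ := norm_fst_le x
  have h₂ : |x.2| ≤ ‖x‖ := norm_snd_le x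
  have row_le : ∀ a b : ℝ, |a * x.1 + b * x.2| ≤ (|a| + |b|) * ‖x‖ := fun a b =>
    calc |a * x.1 + b * x.2| ≤ |a| * |x.1| + |b| * |x.2| := by
          simpa only [abs_mul] using abs_add_le (a * x.1) (b * x.2)
      _ ≤ (|a| + |b|) * ‖x‖ := by
          nlinarith [abs_nonneg a, abs_nonneg b]
  refine max_le ((row_le α β).trans ?_) ((row_le γ δ).trans ?_) <;>
    nlinarith [abs_nonneg α, abs_nonneg β, abs_nonneg γ, abs_nonneg δ, norm_nonneg x]

theorem mul_eq_of_riccati_of_linear (d ν : ℝ) {F G u v Q p₁ p₂ : ℝ → ℝ}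
    (hF : Continuous F) (hG : Continuous G)
    (hu : ∀ t, HasDerivAt u (-(u t) ^ 2 - 2 * u t * F t - v t - ν * u t) t)
    (hv : ∀ t, HasDerivAt v (-(u t) * v t + (1 - d * G t) * u t - d * F t * v t) t)
    (hQ : ∀ t, HasDerivAt Q (p₁ t) t)
    (hp₁ : ∀ t, HasDerivAt p₁ (-(2 * F t + ν) * p₁ t - p₂ t) t)
    (hp₂ : ∀ t, HasDerivAt p₂ ((1 - d * G t) * p₁ t - d * F t * p₂ t) t)
    (hQ0 : Q 0 = 1) (hp₁0 : p₁ 0 = u 0) (hp₂0 : p₂ 0 = v 0) (t : ℝ) :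
    Q t * u t = p₁ t ∧ Q t * v t = p₂ t := by
  set α : ℝ → ℝ := fun t => -(u t + 2 * F t + ν)
  set γ : ℝ → ℝ := fun t => 1 - d * G t - v t
  set δ : ℝ → ℝ := fun t => -(d * F t)
  set e : ℝ → ℝ × ℝ := fun t => (Q t * u t - p₁ t, Q t * v t - p₂ t) with he
  have he' : ∀ t, HasDerivAt e
      (α t * (e t).1 + (-1) * (e t).2, γ t * (e t).1 + δ t * (e t).2) t := fun t => by
    refine (((hQ t).mul (hu t)).sub (hp₁ t)).prodMk (((hQ t).mul (hv t)).sub (hp₂ t))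
      |>.congr_deriv ?_
    simp only [he, α, γ, δ, Prod.mk.injEq]
    constructor <;> ring
  have hu_cont : Continuous u := Differentiable.continuous fun t => (hu t).differentiableAt
  have hv_cont : Continuous v := Differentiable.continuous fun t => (hv t).differentiableAt
  have hM : Continuous fun t => |α t| + |(-1 : ℝ)| + |γ t| + |δ t| := by
    simp only [α, γ, δ]
    fun_prop
  have he0 : e 0 = 0 := by simp [he, hQ0, hp₁0, hp₂0]
  have := eq_zero_of_norm_deriv_le_mul_norm he' hM
    (fun t => norm_linear_prod_le _ _ _ _ (e t)) he0 t
  simpa [he, sub_eq_zero] using this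

theorem stmt8_general (d : ℕ) (ν : ℝ)
    (F G u v Q p₁ p₂ : ℝ → ℝ)
    (hF : ∀ t, HasDerivAt F (-(F t) ^ 2 - G t - ν * F t) t)
    (hG : ∀ t, HasDerivAt G (F t - (d : ℝ) * F t * G t) t)
    (hu : ∀ t, HasDerivAt u (-(u t) ^ 2 - 2 * u t * F t - v t - ν * u t) t)
    (hv : ∀ t, HasDerivAt v
      (-(u t) * v t + (1 - (d : ℝ) * G t) * u t - (d : ℝ) * F t * v t) t)
    (hQ : ∀ t, HasDerivAt Q (p₁ t) t)
    (hp₁ : ∀ t, HasDerivAt p₁ (-(2 * F t + ν) * p₁ t - p₂ t) t)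
    (hp₂ : ∀ t, HasDerivAt p₂
      ((1 - (d : ℝ) * G t) * p₁ t - (d : ℝ) * F t * p₂ t) t)
    (hQ0 : Q 0 = 1) (hp₁0 : p₁ 0 = u 0) (hp₂0 : p₂ 0 = v 0)
    (I : Set ℝ)
    (hQne : ∀ t ∈ I, Q t ≠ 0) :
    ∀ t ∈ I, u t = p₁ t / Q t ∧ v t = p₂ t / Q t := by
  intro t ht
  have hF_cont : Continuous F := Differentiable.continuous fun t => (hF t).differentiableAt
  have hG_cont : Continuous G := Differentiable.continuous fun t => (hG t).differentiableAt
  obtain ⟨hpu, hpv⟩ :=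
    mul_eq_of_riccati_of_linear d ν hF_cont hG_cont hu hv hQ hp₁ hp₂ hQ0 hp₁0 hp₂0 t
  rw [← hpu, ← hpv, mul_div_cancel_left₀ _ (hQne t ht), mul_div_cancel_left₀ _ (hQne t ht)]
  exact ⟨rfl, rfl⟩

/-- Radon-lemma linearization: if `(F,G,u,v)` solves the Riccati system and
`(Q,p₁,p₂)` solves the associated linear system with `Q(0)=1`, `p₁(0)=u(0)`,
`p₂(0)=v(0)`, then on any interval containing `0` on which `Q` does not vanish
one has `u = p₁/Q` and `v = p₂/Q`. -/
theorem stmt8 (d : ℕ) (hd : 1 ≤ d) (ν : ℝ) (hν : 0 ≤ ν)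
    (F G u v Q p₁ p₂ : ℝ → ℝ)
    (hF : ∀ t, HasDerivAt F (-(F t) ^ 2 - G t - ν * F t) t)
    (hG : ∀ t, HasDerivAt G (F t - (d : ℝ) * F t * G t) t)
    (hu : ∀ t, HasDerivAt u (-(u t) ^ 2 - 2 * u t * F t - v t - ν * u t) t)
    (hv : ∀ t, HasDerivAt v
      (-(u t) * v t + (1 - (d : ℝ) * G t) * u t - (d : ℝ) * F t * v t) t)
    (hQ : ∀ t, HasDerivAt Q (p₁ t) t)
    (hp₁ : ∀ t, HasDerivAt p₁ (-(2 * F t + ν) * p₁ t - p₂ t) t)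
    (hp₂ : ∀ t, HasDerivAt p₂
      ((1 - (d : ℝ) * G t) * p₁ t - (d : ℝ) * F t * p₂ t) t)
    (hQ0 : Q 0 = 1) (hp₁0 : p₁ 0 = u 0) (hp₂0 : p₂ 0 = v 0)
    (I : Set ℝ) (hI0 : (0 : ℝ) ∈ I) (hIconn : I.OrdConnected)
    (hQne : ∀ t ∈ I, Q t ≠ 0) :
    ∀ t ∈ I, u t = p₁ t / Q t ∧ v t = p₂ t / Q t :=
  stmt8_general d ν F G u v Q p₁ p₂ hF hG hu hv hQ hp₁ hp₂ hQ0 hp₁0 hp₂0 I hQne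
end

section
/- Let d ≥ 1, ν ≥ 0, let (F,G) solve F' = -F² - G - νF, G' = F - dFG, and let p₁, p₂ solve p₁' = -(2F+ν)p₁ - p₂, p₂' = (1-dG)p₁ - dF·p₂. Then p₁ satisfies the second-order linear ODE p₁'' + ((d+2)F + ν)p₁' + (2(d-1)F² - (d+2)G + (d-2)νF + 1)p₁ = 0. -/
theorem stmt9_general (d : ℕ) (ν : ℝ)
    (F G p₁ p₂ : ℝ → ℝ)
    (hF : ∀ t, HasDerivAt F (-(F t) ^ 2 - G t - ν * F t) t)
    (hp₁ : ∀ t, HasDerivAt p₁ (-(2 * F t + ν) * p₁ t - p₂ t) t)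
    (hp₂ : ∀ t, HasDerivAt p₂
      ((1 - (d : ℝ) * G t) * p₁ t - (d : ℝ) * F t * p₂ t) t) :
    ∀ t, HasDerivAt (fun s => -(2 * F s + ν) * p₁ s - p₂ s)
      (-(((d : ℝ) + 2) * F t + ν) * (-(2 * F t + ν) * p₁ t - p₂ t)
        - (2 * ((d : ℝ) - 1) * (F t) ^ 2 - ((d : ℝ) + 2) * G t
            + ((d : ℝ) - 2) * ν * F t + 1) * p₁ t) t := by
  intro t
  have hp₁' : HasDerivAt (fun s => -(2 * F s + ν) * p₁ s - p₂ s) _ t :=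
    ((((hF t).const_mul 2).add_const ν).neg.mul (hp₁ t)).sub (hp₂ t)
  convert hp₁' using 1
  simp only [Pi.neg_apply]
  ring

/-- The function `p₁` of the linearized system satisfies the second-order ODE
`p₁'' + ((d+2)F + ν)p₁' + (2(d-1)F² - (d+2)G + (d-2)νF + 1)p₁ = 0`. -/
theorem stmt9 (d : ℕ) (hd : 1 ≤ d) (ν : ℝ) (hν : 0 ≤ ν)
    (F G p₁ p₂ : ℝ → ℝ)
    (hF : ∀ t, HasDerivAt F (-(F t) ^ 2 - G t - ν * F t) t)
    (hG : ∀ t, HasDerivAt G (F t - (d : ℝ) * F t * G t) t)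
    (hp₁ : ∀ t, HasDerivAt p₁ (-(2 * F t + ν) * p₁ t - p₂ t) t)
    (hp₂ : ∀ t, HasDerivAt p₂
      ((1 - (d : ℝ) * G t) * p₁ t - (d : ℝ) * F t * p₂ t) t) :
    ∀ t, HasDerivAt (fun s => -(2 * F s + ν) * p₁ s - p₂ s)
      (-(((d : ℝ) + 2) * F t + ν) * (-(2 * F t + ν) * p₁ t - p₂ t)
        - (2 * ((d : ℝ) - 1) * (F t) ^ 2 - ((d : ℝ) + 2) * G t
            + ((d : ℝ) - 2) * ν * F t + 1) * p₁ t) t :=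
  stmt9_general d ν F G p₁ p₂ hF hp₁ hp₂
end

section
/- Let J₊ > 0 be a constant and let J : [0,∞) → ℝ be continuous with J(t) ≤ J₊ for all t. Let H solve H'' + J(t)H = 0 with H(0) ≤ 0 and H'(0) < 0. Then for all t in the interval [0, t*] on which H·H' ≥ 0, one has H(t)² + H'(t)²/J₊ ≥ H(0)² + H'(0)²/J₊; hence at any time t* where H attains a negative minimum, H(t*)² ≥ H(0)² + H'(0)²/J₊. -/
/-!
Along a solution of `H'' + J H = 0` the energy `E = H² + H'²/J₊` satisfies
`E' = 2 H H' (J₊ - J)/J₊`, which is nonnegative while `H H' ≥ 0` and `J ≤ J₊`; so `E` does not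
decrease on such an interval. At an interior minimum `H' = 0`, and the energy bound becomes a
bound on `H²`.
-/

open Set

theorem hasDerivAt_sq_add_sq_div {H H' : ℝ → ℝ} {Jp j t : ℝ} (hJp : Jp ≠ 0)
    (hH : HasDerivAt H (H' t) t) (hH' : HasDerivAt H' (-j * H t) t) :
    HasDerivAt (fun s ↦ H s ^ 2 + H' s ^ 2 / Jp) (2 * (H t * H' t) * ((Jp - j) / Jp)) t := by
  refine ((hH.pow 2).add ((hH'.pow 2).div_const Jp)).congr_deriv ?_
  field_simp
  ring

theorem monotoneOn_sq_add_sq_div {Jp : ℝ} (hJp : 0 < Jp) {J H H' : ℝ → ℝ} {a b : ℝ}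
    (hH : ∀ t ∈ Icc a b, HasDerivAt H (H' t) t)
    (hH' : ∀ t ∈ Icc a b, HasDerivAt H' (-(J t) * H t) t)
    (hJle : ∀ t ∈ Icc a b, J t ≤ Jp) (hHH' : ∀ t ∈ Icc a b, 0 ≤ H t * H' t) :
    MonotoneOn (fun s ↦ H s ^ 2 + H' s ^ 2 / Jp) (Icc a b) := by
  have hE : ∀ t ∈ Icc a b, HasDerivAt (fun s ↦ H s ^ 2 + H' s ^ 2 / Jp)
      (2 * (H t * H' t) * ((Jp - J t) / Jp)) t := fun t ht ↦
    hasDerivAt_sq_add_sq_div hJp.ne' (hH t ht) (hH' t ht)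
  refine monotoneOn_of_hasDerivWithinAt_nonneg (convex_Icc a b)
    (fun t ht ↦ (hE t ht).continuousAt.continuousWithinAt)
    (fun t ht ↦ (hE t (interior_subset ht)).hasDerivWithinAt) fun t ht ↦ ?_
  have ht := interior_subset ht
  have hJ : 0 ≤ Jp - J t := sub_nonneg.2 (hJle t ht)
  have := hHH' t ht
  positivity

theorem stmt12_general (Jp : ℝ) (hJp : 0 < Jp) (J H H' : ℝ → ℝ)
    (hJle : ∀ t ≥ (0 : ℝ), J t ≤ Jp)
    (hH : ∀ t ≥ (0 : ℝ), HasDerivAt H (H' t) t)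
    (hH' : ∀ t ≥ (0 : ℝ), HasDerivAt H' (-(J t) * H t) t) :
    (∀ t ≥ (0 : ℝ), (∀ s ∈ Set.Icc (0 : ℝ) t, H s * H' s ≥ 0) →
      (H t) ^ 2 + (H' t) ^ 2 / Jp ≥ (H 0) ^ 2 + (H' 0) ^ 2 / Jp) ∧
    (∀ tstar ≥ (0 : ℝ), (∀ s ∈ Set.Icc (0 : ℝ) tstar, H s * H' s ≥ 0) →
      IsLocalMin H tstar → H tstar < 0 →
      (H tstar) ^ 2 ≥ (H 0) ^ 2 + (H' 0) ^ 2 / Jp) := by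
  have energy_ge : ∀ t ≥ (0 : ℝ), (∀ s ∈ Icc (0 : ℝ) t, H s * H' s ≥ 0) →
      H t ^ 2 + H' t ^ 2 / Jp ≥ H 0 ^ 2 + H' 0 ^ 2 / Jp := fun t ht hHH' ↦
    monotoneOn_sq_add_sq_div hJp (fun s hs ↦ hH s hs.1) (fun s hs ↦ hH' s hs.1)
      (fun s hs ↦ hJle s hs.1) hHH' (left_mem_Icc.2 ht) (right_mem_Icc.2 ht) ht
  refine ⟨energy_ge, fun tstar ht hHH' hmin _ ↦ ?_⟩
  have hcrit : H' tstar = 0 := hmin.hasDerivAt_eq_zero (hH tstar ht)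
  simpa [hcrit] using energy_ge tstar ht hHH'

/-- If `H'' + J(t)H = 0` with `J ≤ J₊`, `H(0) ≤ 0`, `H'(0) < 0`, then as long
as `H·H' ≥ 0` on `[0,t]` one has `H(t)² + H'(t)²/J₊ ≥ H(0)² + H'(0)²/J₊`;
hence at a time `t*` where `H` attains a negative minimum,
`H(t*)² ≥ H(0)² + H'(0)²/J₊`. -/
theorem stmt12 (Jp : ℝ) (hJp : 0 < Jp) (J H H' : ℝ → ℝ)
    (hJc : ContinuousOn J (Set.Ici (0 : ℝ)))
    (hJle : ∀ t ≥ (0 : ℝ), J t ≤ Jp)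
    (hH : ∀ t ≥ (0 : ℝ), HasDerivAt H (H' t) t)
    (hH' : ∀ t ≥ (0 : ℝ), HasDerivAt H' (-(J t) * H t) t)
    (hH0 : H 0 ≤ 0) (hH'0 : H' 0 < 0) :
    (∀ t ≥ (0 : ℝ), (∀ s ∈ Set.Icc (0 : ℝ) t, H s * H' s ≥ 0) →
      (H t) ^ 2 + (H' t) ^ 2 / Jp ≥ (H 0) ^ 2 + (H' 0) ^ 2 / Jp) ∧
    (∀ tstar ≥ (0 : ℝ), (∀ s ∈ Set.Icc (0 : ℝ) tstar, H s * H' s ≥ 0) →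
      IsLocalMin H tstar → H tstar < 0 →
      (H tstar) ^ 2 ≥ (H 0) ^ 2 + (H' 0) ^ 2 / Jp) :=
  stmt12_general Jp hJp J H H' hJle hH hH'
end
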